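/- arXiv:1706.06957 — 4 statements merged into one kernel-verified Lean document; each statement's English description precedes it below -/
import Mathlib

section
/- Suppose Γ is a free abelian group with basis {e_i : i ∈ I}, I totally ordered, and c is a 2-cocycle on Γ such that for each i < j there exists a square root p_{ij} ∈ K× of c(e_i,e_j)·c(e_j,e_i)⁻¹. Let b be the alternating bicharacter on Γ with b(e_i,e_j) = p_{ij} for i < j. Then there is a function f : Γ → K× such that c(s,t) = f(s)·f(t)·f(s+t)⁻¹·b(s,t) for all s,t ∈ Γ. -/
/-!
Dividing `c` by `b` gives a 2-cocycle `c / b` whose commutator pairing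
`(s, t) ↦ (c / b) s t / (c / b) t s` is bimultiplicative and, since `p i j` is a square root of
the commutator of `c` on `(e_i, e_j)`, trivial on pairs of basis vectors; hence `c / b` is
symmetric. A symmetric 2-cocycle defines an abelian extension of `Γ` by `Kˣ`, which splits
because `Γ` is free, and a splitting exhibits `c / b` as a coboundary.
-/

section

variable {G M : Type*} [AddCommGroup G] [CommGroup M]

def IsTwoCocycle (c : G → G → M) : Prop :=
  ∀ s t u, c s (t + u) * c t u = c (s + t) u * c s t

structure IsBimultiplicative (b : G → G → M) : Prop where
  map_add_left : ∀ s t u, b (s + t) u = b s u * b t u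
  map_add_right : ∀ s t u, b s (t + u) = b s t * b s u

theorem IsBimultiplicative.isTwoCocycle {b : G → G → M} (hb : IsBimultiplicative b) :
    IsTwoCocycle b := by
  intro s t u
  rw [hb.map_add_left, hb.map_add_right]
  ac_rfl

theorem IsBimultiplicative.apply_swap {b : G → G → M} (hb : IsBimultiplicative b)
    (hb_self : ∀ s, b s s = 1) (s t : G) : b t s = (b s t)⁻¹ := by
  have h := hb_self (s + t)
  rw [hb.map_add_left, hb.map_add_right, hb.map_add_right, hb_self, hb_self, one_mul,
    mul_one] at h
  exact eq_inv_of_mul_eq_one_right h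

namespace IsTwoCocycle

variable {c : G → G → M}

theorem div {c' : G → G → M} (hc : IsTwoCocycle c) (hc' : IsTwoCocycle c') :
    IsTwoCocycle (c / c') := by
  intro s t u
  simp only [Pi.div_apply]
  rw [div_mul_div_comm, div_mul_div_comm, hc, hc']

theorem apply_zero_left (hc : IsTwoCocycle c) (s : G) : c 0 s = c 0 0 := by
  have h := hc 0 0 s
  rw [zero_add, zero_add] at h
  exact mul_left_cancel h

theorem apply_zero_right (hc : IsTwoCocycle c) (s : G) : c s 0 = c 0 0 := by
  have h := hc s 0 0
  rw [add_zero, add_zero] at h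
  exact (mul_left_cancel h).symm

theorem isBimultiplicative_antisymm (hc : IsTwoCocycle c) :
    IsBimultiplicative fun s t => c s t / c t s := by
  have add_left : ∀ s t u, c (s + t) u / c u (s + t) = c s u / c u s * (c t u / c u t) := by
    intro s t u
    rw [div_mul_div_comm, div_eq_div_iff_mul_eq_mul]
    refine mul_right_cancel (b := c s t) ?_
    calc c (s + t) u * (c u s * c u t) * c s t
        = c (s + t) u * c s t * c u s * c u t := by ac_rfl
      _ = c s (u + t) * c u t * c t u * c u s := by rw [← hc, add_comm t u]; ac_rfl
      _ = c s u * c t u * (c (u + s) t * c u s) := by rw [hc, add_comm s u]; ac_rfl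
      _ = c s u * c t u * c u (s + t) * c s t := by rw [← hc]; ac_rfl
  refine ⟨add_left, fun s t u => ?_⟩
  rw [← inv_div, add_left, mul_inv, inv_div, inv_div]

end IsTwoCocycle

/-- The extension of `G` by `M` with factor set `c`. -/
@[ext]
structure CocycleExtension (_c : G → G → M) where
  fiber : M
  base : G

namespace CocycleExtension

variable {c : G → G → M}

@[reducible]
def commGroup (hc : IsTwoCocycle c) (hsymm : ∀ s t, c s t = c t s) :
    CommGroup (CocycleExtension c) where
  mul x y := ⟨x.fiber * y.fiber * c x.base y.base, x.base + y.base⟩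
  -- `c` need not be normalized, so the identity sits over `c 0 0`.
  one := ⟨(c 0 0)⁻¹, 0⟩
  inv x := ⟨x.fiber⁻¹ * (c x.base (-x.base) * c 0 0)⁻¹, -x.base⟩
  mul_assoc x y z := by
    refine CocycleExtension.ext ?_ (add_assoc x.base y.base z.base)
    calc x.fiber * y.fiber * c x.base y.base * z.fiber * c (x.base + y.base) z.base
        = x.fiber * y.fiber * z.fiber * (c (x.base + y.base) z.base * c x.base y.base) := by
          ac_rfl
      _ = x.fiber * (y.fiber * z.fiber * c y.base z.base) * c x.base (y.base + z.base) := by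
          rw [← hc]; ac_rfl
  one_mul x := CocycleExtension.ext (by
    change (c 0 0)⁻¹ * x.fiber * c 0 x.base = x.fiber
    rw [hc.apply_zero_left x.base, inv_mul_cancel_comm]) (zero_add x.base)
  mul_one x := CocycleExtension.ext (by
    change x.fiber * (c 0 0)⁻¹ * c x.base 0 = x.fiber
    rw [hc.apply_zero_right x.base, inv_mul_cancel_right]) (add_zero x.base)
  inv_mul_cancel x := CocycleExtension.ext (by
    change x.fiber⁻¹ * (c x.base (-x.base) * c 0 0)⁻¹ * x.fiber * c (-x.base) x.base =
      (c 0 0)⁻¹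
    rw [hsymm (-x.base)]
    simp [mul_comm]) (neg_add_cancel x.base)
  mul_comm x y := CocycleExtension.ext (by
    change x.fiber * y.fiber * c x.base y.base = y.fiber * x.fiber * c y.base x.base
    rw [hsymm, mul_comm x.fiber]) (add_comm x.base y.base)

end CocycleExtension

theorem IsTwoCocycle.exists_eq_coboundary_of_symm [Module.Projective ℤ G] {c : G → G → M}
    (hc : IsTwoCocycle c) (hsymm : ∀ s t, c s t = c t s) :
    ∃ f : G → M, ∀ s t, c s t = f s * f t * (f (s + t))⁻¹ := by
  let _ := CocycleExtension.commGroup hc hsymm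
  let π : Additive (CocycleExtension c) →+ G :=
    AddMonoidHom.mk' (fun x => x.toMul.base) fun _ _ => rfl
  have hπ : Function.Surjective π := fun s => ⟨Additive.ofMul ⟨1, s⟩, rfl⟩
  obtain ⟨σ, hσ⟩ := Module.projective_lifting_property π.toIntLinearMap LinearMap.id hπ
  have hπσ (s : G) : (σ s).toMul.base = s := LinearMap.congr_fun hσ s
  set g : G → M := fun s => (σ s).toMul.fiber
  have hg (s t : G) : g (s + t) = g s * g t * c s t := by
    have h : g (s + t) = g s * g t * c (σ s).toMul.base (σ t).toMul.base :=
      congrArg (fun x => x.toMul.fiber) (map_add σ s t)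
    rwa [hπσ, hπσ] at h
  exact ⟨fun s => (g s)⁻¹, fun s t => by rw [inv_inv, hg, ← mul_inv, inv_mul_cancel_left]⟩

theorem Finsupp.eq_one_of_map_add {I : Type*} {φ : (I →₀ ℤ) → M}
    (hφ : ∀ s t, φ (s + t) = φ s * φ t) (hφ_single : ∀ i, φ (Finsupp.single i 1) = 1)
    (s : I →₀ ℤ) : φ s = 1 := by
  let F : (I →₀ ℤ) →+ Additive M := AddMonoidHom.mk' (fun s => Additive.ofMul (φ s)) hφ
  have hF : F = 0 := Finsupp.addHom_ext' fun i => AddMonoidHom.ext_int (hφ_single i)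
  exact congrArg Additive.toMul (DFunLike.congr_fun hF s)

theorem IsBimultiplicative.eq_one_of_single {I : Type*}
    {b : (I →₀ ℤ) → (I →₀ ℤ) → M} (hb : IsBimultiplicative b)
    (hb_single : ∀ i j, b (Finsupp.single i 1) (Finsupp.single j 1) = 1) (s t : I →₀ ℤ) :
    b s t = 1 :=
  Finsupp.eq_one_of_map_add (φ := (b · t)) (hb.map_add_left · · t)
    (fun i => Finsupp.eq_one_of_map_add (hb.map_add_right _) (hb_single i) t) s

/-- Artin–Schelter–Tate. -/
theorem IsTwoCocycle.exists_eq_coboundary_mul {I : Type*}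
    {c c' : (I →₀ ℤ) → (I →₀ ℤ) → M}
    (hc : IsTwoCocycle c) (hc' : IsTwoCocycle c')
    (h : ∀ i j,
      c (Finsupp.single i 1) (Finsupp.single j 1) / c (Finsupp.single j 1) (Finsupp.single i 1) =
        c' (Finsupp.single i 1) (Finsupp.single j 1) /
          c' (Finsupp.single j 1) (Finsupp.single i 1)) :
    ∃ f : (I →₀ ℤ) → M, ∀ s t, c s t = f s * f t * (f (s + t))⁻¹ * c' s t := by
  have hsymm (s t : I →₀ ℤ) : (c / c') s t = (c / c') t s := by
    refine div_eq_one.mp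
      ((hc.div hc').isBimultiplicative_antisymm.eq_one_of_single (fun i j => ?_) s t)
    simp only [Pi.div_apply, div_div_div_comm, h, div_self']
  obtain ⟨f, hf⟩ := (hc.div hc').exists_eq_coboundary_of_symm hsymm
  exact ⟨f, fun s t => div_eq_iff_eq_mul.mp (hf s t)⟩

end

/-- Let `Γ = ⊕_{i ∈ I} ℤ e_i` be free abelian with totally ordered basis, `c` a
2-cocycle on `Γ` such that each `c(e_i,e_j)·c(e_j,e_i)⁻¹` (for `i < j`) admits a
square root `p i j`, and let `b` be the alternating bicharacter with
`b(e_i,e_j) = p i j` for `i < j`.  Then `c` differs from `b` by a coboundary. -/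
theorem stmt_8 {K : Type*} [Field K] {I : Type*} [LinearOrder I]
    (c : (I →₀ ℤ) → (I →₀ ℤ) → Kˣ)
    (hc : ∀ s t u : I →₀ ℤ, c s (t + u) * c t u = c (s + t) u * c s t)
    (p : I → I → Kˣ)
    (hp : ∀ i j : I, i < j →
      p i j * p i j = c (Finsupp.single i 1) (Finsupp.single j 1) *
        (c (Finsupp.single j 1) (Finsupp.single i 1))⁻¹)
    (b : (I →₀ ℤ) → (I →₀ ℤ) → Kˣ)
    (hb₁ : ∀ s t u : I →₀ ℤ, b (s + t) u = b s u * b t u)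
    (hb₂ : ∀ s t u : I →₀ ℤ, b s (t + u) = b s t * b s u)
    (hbalt : ∀ s : I →₀ ℤ, b s s = 1)
    (hb : ∀ i j : I, i < j → b (Finsupp.single i 1) (Finsupp.single j 1) = p i j) :
    ∃ f : (I →₀ ℤ) → Kˣ, ∀ s t : I →₀ ℤ,
      c s t = f s * f t * (f (s + t))⁻¹ * b s t := by
  have hb_bimul : IsBimultiplicative b := ⟨hb₁, hb₂⟩
  have h_lt (i j : I) (hij : i < j) :
      c (Finsupp.single i 1) (Finsupp.single j 1) / c (Finsupp.single j 1) (Finsupp.single i 1) =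
        b (Finsupp.single i 1) (Finsupp.single j 1) /
          b (Finsupp.single j 1) (Finsupp.single i 1) := by
    rw [hb_bimul.apply_swap hbalt (Finsupp.single i 1), div_inv_eq_mul, hb i j hij, hp i j hij,
      div_eq_mul_inv]
  refine IsTwoCocycle.exists_eq_coboundary_mul hc hb_bimul.isTwoCocycle fun i j => ?_
  rcases lt_trichotomy i j with hij | rfl | hij
  · exact h_lt i j hij
  · rw [div_self', div_self']
  · rw [← inv_div, h_lt j i hij, inv_div]
end

section
/- Let R be a ring, X ⊆ R a right denominator set, and suppose a₀,…,a_n ∈ R and x₀,…,x_n ∈ X satisfy a₀x₀⁻¹ = (a₁x₁⁻¹)(a₂x₂⁻¹)⋯(a_nx_n⁻¹) in the right localization RX⁻¹. Then there exist b₁,…,b_n ∈ R and y₁ = 1, y₂,…,y_n, z ∈ X such that a₁b₂⋯b_n z = a₀b₁, x_n y_n z = x₀ b₁, and x_{i-1} y_{i-1} b_i = a_i y_i for all i ∈ [2,n]. -/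
/-!
Multiply the fractions from the left. If the partial product is `N (x_{i-1} y_{i-1})⁻¹`, the
Ore condition rewrites `(x_{i-1} y_{i-1})⁻¹ aᵢ` as `bᵢ yᵢ⁻¹` with `x_{i-1} y_{i-1} bᵢ = aᵢ yᵢ`,
so the next partial product is `N bᵢ (xᵢ yᵢ)⁻¹`. At the end `a₀x₀⁻¹ = a₁b₂⋯bₙ (xₙyₙ)⁻¹`, and
an equality of two right fractions means they have a common expansion, by `b₁` and `z`.
-/

open MulOpposite OreLocalization

namespace OreLocalization

variable {R : Type*} [Monoid R] {X : Submonoid Rᵐᵒᵖ} [OreSet X]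

theorem op_oreDiv_mul_op_oreDiv (a c : R) (x s : X) :
    (op a /ₒ x) * (op c /ₒ s : Rᵐᵒᵖ[X⁻¹])
      = op (c * unop (oreNum (op a) s)) /ₒ (oreDenom (op a) s * x) := by
  rw [oreDiv_mul_char _ _ _ _ _ _ (ore_eq (op a) s), op_mul, op_unop]

theorem exists_mul_eq_of_op_oreDiv_eq {a a' : R} {s s' : X}
    (h : (op a /ₒ s : Rᵐᵒᵖ[X⁻¹]) = op a' /ₒ s') :
    ∃ (u : X) (v : R), a' * unop (u : Rᵐᵒᵖ) = a * v ∧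
      unop (s' : Rᵐᵒᵖ) * unop (u : Rᵐᵒᵖ) = unop (s : Rᵐᵒᵖ) * v := by
  obtain ⟨u, v, hnum, hden⟩ := oreDiv_eq_iff.mp h
  exact ⟨u, unop v, congrArg unop hnum, congrArg unop hden⟩

variable (X) (a : ℕ → R) (x : ℕ → X)

/-- `chainDenom i` and `chainNum i` are the `yᵢ` and `bᵢ` (`i ≥ 2`) of the clearing step
`x_{i-1} y_{i-1} bᵢ = aᵢ yᵢ`, read in `Rᵐᵒᵖ` as an instance of `ore_eq`. -/
noncomputable def chainDenom : ℕ → X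
  | 0 => 1
  | 1 => 1
  | n + 2 => oreDenom (op (a (n + 2))) (chainDenom (n + 1) * x (n + 1))

noncomputable def chainNum (i : ℕ) : R :=
  unop (oreNum (op (a i)) (chainDenom X a x (i - 1) * x (i - 1)))

theorem chainDenom_one : chainDenom X a x 1 = 1 := rfl

theorem chainDenom_mul_chainNum {i : ℕ} (hi : 2 ≤ i) :
    unop (x (i - 1) : Rᵐᵒᵖ) * unop (chainDenom X a x (i - 1) : Rᵐᵒᵖ) * chainNum X a x i
      = a i * unop (chainDenom X a x i : Rᵐᵒᵖ) := by
  obtain ⟨n, rfl⟩ := Nat.exists_eq_add_of_le' hi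
  have hore := congrArg unop (ore_eq (op (a (n + 2))) (chainDenom X a x (n + 1) * x (n + 1)))
  simp only [unop_mul, unop_op, Submonoid.coe_mul] at hore
  exact hore.symm

theorem list_prod_op_oreDiv_eq_chain (m : ℕ) :
    ((List.range (m + 1)).map (fun i => (op (a (m + 1 - i)) /ₒ x (m + 1 - i) : Rᵐᵒᵖ[X⁻¹]))).prod
      = op (a 1 * ((List.range m).map (fun i => chainNum X a x (i + 2))).prod)
          /ₒ (chainDenom X a x (m + 1) * x (m + 1)) := by
  induction m with
  | zero => simp [chainDenom_one]
  | succ m ih =>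
    rw [List.prod_range_succ', Nat.sub_zero]
    simp only [Nat.succ_sub_succ]
    rw [ih, op_oreDiv_mul_op_oreDiv, List.prod_range_succ, mul_assoc]
    rfl -- unfolds `chainDenom (m + 2)` and `chainNum (m + 2)`

end OreLocalization

/-- Common-denominator lemma for right Ore fractions.  The right localization
`RX⁻¹` of `R` at a right denominator set `X` is realized in Mathlib as the
(left-fraction) Ore localization of the opposite ring `Rᵐᵒᵖ` at the image
`X ⊆ Rᵐᵒᵖ` of `X`; the right fraction `a·x⁻¹` corresponds to
`op a /ₒ x`, and products get reversed.  If
`a₀x₀⁻¹ = (a₁x₁⁻¹)(a₂x₂⁻¹)⋯(a_nx_n⁻¹)` in `RX⁻¹`, then there are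
`b₁,…,b_n ∈ R` and `y₁ = 1, y₂,…,y_n, z ∈ X` with `a₁b₂⋯b_n z = a₀b₁`,
`x_n y_n z = x₀ b₁`, and `x_{i-1} y_{i-1} b_i = a_i y_i` for `2 ≤ i ≤ n`. -/
theorem stmt_12 {R : Type*} [Ring R] (X : Submonoid Rᵐᵒᵖ)
    [OreLocalization.OreSet X]
    (n : ℕ) (hn : 1 ≤ n) (a : ℕ → R) (x : ℕ → X)
    (h : (op (a 0) /ₒ x 0 : Rᵐᵒᵖ[X⁻¹]) =
      ((List.range n).map (fun i => (op (a (n - i)) /ₒ x (n - i) : Rᵐᵒᵖ[X⁻¹]))).prod) :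
    ∃ (b : ℕ → R) (y : ℕ → X) (z : X),
      y 1 = 1 ∧
      a 1 * ((List.range (n - 1)).map (fun i => b (i + 2))).prod * unop (z : Rᵐᵒᵖ)
        = a 0 * b 1 ∧
      unop ((x n : Rᵐᵒᵖ)) * unop ((y n : Rᵐᵒᵖ)) * unop ((z : Rᵐᵒᵖ))
        = unop ((x 0 : Rᵐᵒᵖ)) * b 1 ∧
      ∀ i, 2 ≤ i → i ≤ n →
        unop ((x (i - 1) : Rᵐᵒᵖ)) * unop ((y (i - 1) : Rᵐᵒᵖ)) * b i
          = a i * unop ((y i : Rᵐᵒᵖ)) := by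
  obtain ⟨m, rfl⟩ := Nat.exists_eq_add_of_le' hn
  rw [list_prod_op_oreDiv_eq_chain] at h
  obtain ⟨z, b₁, hnum, hden⟩ := exists_mul_eq_of_op_oreDiv_eq h
  refine ⟨Function.update (chainNum X a x) 1 b₁, chainDenom X a x, z, chainDenom_one X a x,
    ?_, ?_, fun i hi _ => ?_⟩
  · simpa [Function.update_apply] using hnum
  · simpa [mul_assoc] using hden
  · simpa [Function.update_of_ne (by omega : i ≠ 1)] using chainDenom_mul_chainNum X a x hi
end

section
/- With notation as in the Ore-fraction lemma: if additionally φ : R → S is a ring homomorphism mapping x₀,…,x_n, y₂,…,y_n, z to units of S, then φ(a₀)φ(x₀)⁻¹ = φ(a₁)φ(x₁)⁻¹·φ(a₂)φ(x₂)⁻¹ ⋯ φ(a_n)φ(x_n)⁻¹ in S. -/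
/-!
Only the multiplicative structure of `S` enters. Writing `P_k = φ(a₁)φ(x₁)⁻¹ ⋯ φ(a_k)φ(x_k)⁻¹`,
the relations `x_{i-1} y_{i-1} b_i = a_i y_i` make `P_k φ(x_k y_k) = φ(a₁ b₂ ⋯ b_k)` telescope.
For `k = n`, multiplying by `φ(z)` and using the two remaining relations gives
`P_n φ(x_n y_n z) = φ(a₀) φ(x₀)⁻¹ φ(x_n y_n z)`, and `φ(x_n y_n z)` is a unit.
-/

section Monoid

variable {M : Type*} [Monoid M]

theorem prod_range_mul_inv_mul_eq (a b x y w : ℕ → M) (hy1 : y 1 = 1) (k : ℕ)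
    (hw : ∀ i, 1 ≤ i → i ≤ k + 1 → w i * x i = 1)
    (h3 : ∀ i, 2 ≤ i → i ≤ k + 1 → x (i - 1) * y (i - 1) * b i = a i * y i) :
    ((List.range (k + 1)).map fun i => a (i + 1) * w (i + 1)).prod * (x (k + 1) * y (k + 1)) =
      a 1 * ((List.range k).map fun i => b (i + 2)).prod := by
  induction k with
  | zero => simp [hy1, mul_assoc, hw 1 le_rfl le_rfl]
  | succ k ih =>
    rw [List.prod_range_succ]
    set P := ((List.range (k + 1)).map fun i => a (i + 1) * w (i + 1)).prod
    calc P * (a (k + 2) * w (k + 2)) * (x (k + 2) * y (k + 2))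
        = P * (a (k + 2) * (w (k + 2) * x (k + 2)) * y (k + 2)) := by simp only [mul_assoc]
      _ = P * (x (k + 1) * y (k + 1)) * b (k + 2) := by
          rw [hw (k + 2) (by omega) le_rfl, mul_one, ← h3 (k + 2) le_add_self le_rfl]
          simp only [mul_assoc]
          rfl
      _ = _ := by
          rw [ih (fun i h h' => hw i h (by omega)) (fun i h h' => h3 i h (by omega)),
            List.prod_range_succ, mul_assoc]

theorem mul_inv_eq_prod_range_mul_inv (n : ℕ) (hn : 1 ≤ n) (a b x y w : ℕ → M) (z : M)
    (hy1 : y 1 = 1)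
    (h1 : a 1 * ((List.range (n - 1)).map fun i => b (i + 2)).prod * z = a 0 * b 1)
    (h2 : x n * y n * z = x 0 * b 1)
    (h3 : ∀ i, 2 ≤ i → i ≤ n → x (i - 1) * y (i - 1) * b i = a i * y i)
    (hyn : IsUnit (y n)) (hz : IsUnit z)
    (hw : ∀ i, i ≤ n → w i * x i = 1 ∧ x i * w i = 1) :
    a 0 * w 0 = ((List.range n).map fun i => a (i + 1) * w (i + 1)).prod := by
  obtain ⟨k, rfl⟩ : ∃ k, n = k + 1 := ⟨n - 1, by omega⟩
  have hxn : IsUnit (x (k + 1)) := ⟨⟨_, _, (hw _ le_rfl).2, (hw _ le_rfl).1⟩, rfl⟩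
  rw [Nat.add_sub_cancel] at h1
  have htel := prod_range_mul_inv_mul_eq a b x y w hy1 k (fun i _ h => (hw i h).1) h3
  set P := ((List.range (k + 1)).map fun i => a (i + 1) * w (i + 1)).prod
  refine ((hxn.mul hyn).mul hz |>.mul_right_cancel ?_).symm
  calc P * (x (k + 1) * y (k + 1) * z)
      = a 0 * b 1 := by rw [← h1, ← htel]; simp only [mul_assoc]
    _ = a 0 * (w 0 * x 0) * b 1 := by rw [(hw 0 (Nat.zero_le _)).1, mul_one]
    _ = a 0 * w 0 * (x (k + 1) * y (k + 1) * z) := by rw [h2]; simp only [mul_assoc]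

end Monoid

theorem stmt_13_general {R S : Type*} [Ring R] [Ring S] (φ : R →+* S)
    (n : ℕ) (hn : 1 ≤ n) (a b x y : ℕ → R) (z : R)
    (hy1 : y 1 = 1)
    (h1 : a 1 * ((List.range (n - 1)).map (fun i => b (i + 2))).prod * z = a 0 * b 1)
    (h2 : x n * y n * z = x 0 * b 1)
    (h3 : ∀ i, 2 ≤ i → i ≤ n → x (i - 1) * y (i - 1) * b i = a i * y i)
    (hy : ∀ i, 2 ≤ i → i ≤ n → IsUnit (φ (y i)))
    (hz : IsUnit (φ z))
    (w : ℕ → S)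
    (hw : ∀ i, i ≤ n → w i * φ (x i) = 1 ∧ φ (x i) * w i = 1) :
    φ (a 0) * w 0 =
      ((List.range n).map (fun i => φ (a (i + 1)) * w (i + 1))).prod := by
  have hyn : IsUnit (φ (y n)) := by
    obtain rfl | hn := hn.eq_or_lt
    · simp [hy1]
    · exact hy n hn le_rfl
  refine mul_inv_eq_prod_range_mul_inv n hn (φ ∘ a) (φ ∘ b) (φ ∘ x) (φ ∘ y) w (φ z)
    (by simp [hy1]) ?_ (by simpa using congrArg φ h2)
    (fun i h h' => by simpa using congrArg φ (h3 i h h')) hyn hz hw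
  simpa [map_list_prod, List.map_map, Function.comp_def] using congrArg φ h1

/-- If `φ : R → S` maps `x₀,…,x_n`, `y₂,…,y_n` and `z` to units of `S`, then
from the relations `y₁ = 1`, `a₁b₂⋯b_n z = a₀b₁`, `x_n y_n z = x₀b₁` and
`x_{i-1} y_{i-1} b_i = a_i y_i` (for `2 ≤ i ≤ n`) one obtains
`φ(a₀)φ(x₀)⁻¹ = φ(a₁)φ(x₁)⁻¹ ⋯ φ(a_n)φ(x_n)⁻¹` in `S`; here `w i` denotes the
two-sided inverse of `φ (x i)`. -/
theorem stmt_13 {R S : Type*} [Ring R] [Ring S] (φ : R →+* S)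
    (n : ℕ) (hn : 1 ≤ n) (a b x y : ℕ → R) (z : R)
    (hy1 : y 1 = 1)
    (h1 : a 1 * ((List.range (n - 1)).map (fun i => b (i + 2))).prod * z = a 0 * b 1)
    (h2 : x n * y n * z = x 0 * b 1)
    (h3 : ∀ i, 2 ≤ i → i ≤ n → x (i - 1) * y (i - 1) * b i = a i * y i)
    (hx : ∀ i, i ≤ n → IsUnit (φ (x i)))
    (hy : ∀ i, 2 ≤ i → i ≤ n → IsUnit (φ (y i)))
    (hz : IsUnit (φ z))
    (w : ℕ → S)
    (hw : ∀ i, i ≤ n → w i * φ (x i) = 1 ∧ φ (x i) * w i = 1) :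
    φ (a 0) * w 0 =
      ((List.range n).map (fun i => φ (a (i + 1)) * w (i + 1))).prod :=
  stmt_13_general φ n hn a b x y z hy1 h1 h2 h3 hy hz w hw
end

section
/- Let Γ be a free abelian group of rank n, χ : ℤⁿ × ℤⁿ → K× an alternating bicharacter, and φ : ℤⁿ → Γ a surjective group homomorphism. Then there exists a basis b₁,…,b_n of ℤⁿ such that b₁,…,b_m is a basis of ker φ and φ(b_{m+1}),…,φ(b_n) is a basis of Γ; moreover there exists a 2-cocycle c on Γ such that the twisted bicharacter χ_c(s,t) := χ(s,t)·c#(φ(s),φ(t)) satisfies χ_c(b_i,b_j) = χ(b_i,b_j) when i ≤ m or j ≤ m, and χ_c(b_i,b_j) = 1 when i,j > m. -/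
/-!
Choose a section of `φ` (possible as `Γ` is free) to split `ℤⁿ ≅ ker φ × Γ`. A basis of `ker φ`
(a submodule of a free module over a PID) followed by lifts of a basis of `Γ` is then a basis of
`ℤⁿ` of the required shape. For the cocycle take the bimultiplicative `c` on `Γ` with
`c(φ b_p, φ b_q) = χ(b_p, b_q)⁻¹` for `p < q` and `1` otherwise: being bimultiplicative it is a
cocycle, `c#` is trivial as soon as one argument lies in `ker φ`, and on the lifted basis
`c# = χ⁻¹` because `χ` is alternating, hence antisymmetric.
-/

def IsCocycle {K : Type*} [Field K] {Γ : Type*} [AddCommGroup Γ]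
    (c : Γ → Γ → Kˣ) : Prop :=
  ∀ s t u : Γ, c s (t + u) * c t u = c (s + t) u * c s t

open Module LinearMap

theorem mul_swap_eq_one_of_alternating {M G : Type*} [Add M] [Monoid G] {χ : M → M → G}
    (hχ₁ : ∀ s t u, χ (s + t) u = χ s u * χ t u) (hχ₂ : ∀ s t u, χ s (t + u) = χ s t * χ s u)
    (hχalt : ∀ s, χ s s = 1) (s t : M) : χ s t * χ t s = 1 := by
  simpa [hχ₁, hχ₂, hχalt, mul_assoc] using hχalt (s + t)

section Cocycle

variable {K : Type*} [Field K] {Γ : Type*} [AddCommGroup Γ]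

theorem isCocycle_toMul_of_bilinear (B : Γ →ₗ[ℤ] Γ →ₗ[ℤ] Additive Kˣ) :
    IsCocycle fun s t => (B s t).toMul := by
  intro s t u
  simp only [map_add, LinearMap.add_apply, toMul_add]
  exact mul_rotate _ _ _

def strictUpperInv {ι G : Type*} [LinearOrder ι] [Group G] (a : ι → ι → G) (p q : ι) : G :=
  if p < q then (a p q)⁻¹ else 1

theorem mul_strictUpperInv_mul_inv_eq_one {ι G : Type*} [LinearOrder ι] [Group G]
    {a : ι → ι → G} (ha : ∀ p q, a p q * a q p = 1) (hdiag : ∀ p, a p p = 1) (p q : ι) :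
    a p q * (strictUpperInv a p q * (strictUpperInv a q p)⁻¹) = 1 := by
  rcases lt_trichotomy p q with hpq | rfl | hpq
  · simp [strictUpperInv, hpq, hpq.not_gt]
  · simp [strictUpperInv, hdiag]
  · simpa [strictUpperInv, hpq, hpq.not_gt] using ha p q

theorem Module.Basis.exists_isCocycle_mul_twist_eq_one {ι : Type*} [LinearOrder ι]
    (bΓ : Basis ι ℤ Γ) {a : ι → ι → Kˣ} (ha : ∀ p q, a p q * a q p = 1)
    (hdiag : ∀ p, a p p = 1) :
    ∃ c : Γ → Γ → Kˣ, IsCocycle c ∧ (∀ γ, c 0 γ = 1) ∧ (∀ γ, c γ 0 = 1) ∧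
      ∀ p q, a p q * (c (bΓ p) (bΓ q) * (c (bΓ q) (bΓ p))⁻¹) = 1 := by
  let B := bΓ.constr ℤ fun p => bΓ.constr ℤ fun q => Additive.ofMul (strictUpperInv a p q)
  refine ⟨fun s t => (B s t).toMul, isCocycle_toMul_of_bilinear B, by simp, by simp,
    fun p q => ?_⟩
  simpa [B, Basis.constr_basis] using mul_strictUpperInv_mul_inv_eq_one ha hdiag p q

end Cocycle

theorem LinearMap.exists_basis_sum_of_surjective {R M N : Type*} [Ring R] [AddCommGroup M]
    [Module R M] [AddCommGroup N] [Module R N] (φ : M →ₗ[R] N) (hφ : Function.Surjective φ)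
    {κ ι : Type*} (bK : Basis κ R (ker φ)) (bN : Basis ι R N) :
    ∃ b : Basis (κ ⊕ ι) R M, (∀ j, b (.inl j) = bK j) ∧ ∀ p, φ (b (.inr p)) = bN p := by
  have := Module.Projective.of_basis bN
  obtain ⟨σ, hσ⟩ := Module.projective_lifting_property φ LinearMap.id hφ
  obtain ⟨e, hinl, hsnd⟩ :=
    (exact_subtype_ker_map φ).splitSurjectiveEquiv (ker φ).injective_subtype ⟨σ, hσ⟩
  refine ⟨(bK.prod bN).map e.symm, fun j => ?_, fun p => ?_⟩
  · simpa using (LinearMap.congr_fun hinl (bK j)).symm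
  · simpa using LinearMap.congr_fun hsnd (e.symm (0, bN p))

section FinSplit

variable {m n : ℕ}

def finSumSubtypeLeEquiv (hm : m ≤ n) : Fin m ⊕ {i : Fin n // m ≤ (i : ℕ)} ≃ Fin n :=
  ((Fin.castLEquiv hm).sumCongr (Equiv.subtypeEquivRight fun _ => not_lt.symm)).trans
    (Equiv.sumCompl fun i : Fin n => (i : ℕ) < m)

theorem finSumSubtypeLeEquiv_symm_castLE (hm : m ≤ n) (i : Fin m) :
    (finSumSubtypeLeEquiv hm).symm (Fin.castLE hm i) = .inl i :=
  (Equiv.symm_apply_eq _).mpr rfl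

theorem finSumSubtypeLeEquiv_symm_val (hm : m ≤ n) (i : {i : Fin n // m ≤ (i : ℕ)}) :
    (finSumSubtypeLeEquiv hm).symm i = .inr i :=
  (Equiv.symm_apply_eq _).mpr rfl

theorem card_subtype_le_add (hm : m ≤ n) : m + Fintype.card {i : Fin n // m ≤ (i : ℕ)} = n := by
  simpa using Fintype.card_congr (finSumSubtypeLeEquiv hm)

end FinSplit

theorem LinearMap.exists_basis_adapted_of_surjective {R M N : Type*} [CommRing R] [IsDomain R]
    [IsPrincipalIdealRing R] [AddCommGroup M] [Module R M] [AddCommGroup N] [Module R N]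
    [Module.Free R N] {n : ℕ} (v : Basis (Fin n) R M) (φ : M →ₗ[R] N)
    (hφ : Function.Surjective φ) :
    ∃ (m : ℕ) (hm : m ≤ n) (b : Basis (Fin n) R M) (bK : Basis (Fin m) R (ker φ))
      (bN : Basis {i : Fin n // m ≤ (i : ℕ)} R N),
      (∀ i : Fin m, b (Fin.castLE hm i) = bK i) ∧
        ∀ i : {i : Fin n // m ≤ (i : ℕ)}, φ (b i) = bN i := by
  obtain ⟨m, bK⟩ := Submodule.basisOfPid v (ker φ)
  have : Module.Finite R M := .of_basis v
  have : Module.Finite R N := .of_surjective φ hφ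
  have hrank : finrank R N + m = n := by
    simpa [(φ.quotKerEquivOfSurjective hφ).finrank_eq, finrank_eq_card_basis bK,
      finrank_eq_card_basis v] using (ker φ).finrank_quotient_add_finrank
  have hm : m ≤ n := by omega
  have hcard : finrank R N = Fintype.card {i : Fin n // m ≤ (i : ℕ)} := by
    have := card_subtype_le_add hm
    omega
  let bN := (finBasisOfFinrankEq R N hcard).reindex (Fintype.equivFinOfCardEq rfl).symm
  obtain ⟨b₀, hb₀K, hb₀N⟩ := φ.exists_basis_sum_of_surjective hφ bK bN
  refine ⟨m, hm, b₀.reindex (finSumSubtypeLeEquiv hm), bK, bN, fun i => ?_, fun i => ?_⟩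
  · simp [finSumSubtypeLeEquiv_symm_castLE, hb₀K]
  · simp [finSumSubtypeLeEquiv_symm_val, hb₀N]

/-- Given an alternating bicharacter `χ` on `ℤⁿ` and a surjection
`φ : ℤⁿ → Γ` onto a free abelian group, there is a basis `b₁,…,b_n` of `ℤⁿ`
with `b₁,…,b_m` a basis of `ker φ` and `φ(b_{m+1}),…,φ(b_n)` a basis of `Γ`,
and a 2-cocycle `c` on `Γ` such that the twisted bicharacter
`χ_c(s,t) = χ(s,t)·c#(φ s, φ t)` agrees with `χ` on pairs `(b_i,b_j)` with
`i ≤ m` or `j ≤ m`, and equals `1` on pairs with `i, j > m`. -/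
theorem stmt_17 {K : Type*} [Field K] {n : ℕ} {Γ : Type*} [AddCommGroup Γ]
    [Module.Free ℤ Γ]
    (χ : (Fin n → ℤ) → (Fin n → ℤ) → Kˣ)
    (hχ₁ : ∀ s t u : Fin n → ℤ, χ (s + t) u = χ s u * χ t u)
    (hχ₂ : ∀ s t u : Fin n → ℤ, χ s (t + u) = χ s t * χ s u)
    (hχalt : ∀ s : Fin n → ℤ, χ s s = 1)
    (φ : (Fin n → ℤ) →ₗ[ℤ] Γ) (hφ : Function.Surjective φ) :
    ∃ (m : ℕ) (hm : m ≤ n) (b : Module.Basis (Fin n) ℤ (Fin n → ℤ)),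
      (∃ bK : Module.Basis (Fin m) ℤ (LinearMap.ker φ),
        ∀ i : Fin m, (bK i : Fin n → ℤ) = b ⟨(i : ℕ), lt_of_lt_of_le i.isLt hm⟩) ∧
      (∃ bΓ : Module.Basis {i : Fin n // m ≤ (i : ℕ)} ℤ Γ, ∀ i, bΓ i = φ (b i)) ∧
      ∃ c : Γ → Γ → Kˣ, IsCocycle c ∧
        (∀ i j : Fin n, ((i : ℕ) < m ∨ (j : ℕ) < m) →
          χ (b i) (b j) * (c (φ (b i)) (φ (b j)) * (c (φ (b j)) (φ (b i)))⁻¹)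
            = χ (b i) (b j)) ∧
        (∀ i j : Fin n, m ≤ (i : ℕ) → m ≤ (j : ℕ) →
          χ (b i) (b j) * (c (φ (b i)) (φ (b j)) * (c (φ (b j)) (φ (b i)))⁻¹)
            = 1) := by
  obtain ⟨m, hm, b, bK, bΓ, hbK, hbΓ⟩ :=
    φ.exists_basis_adapted_of_surjective (Pi.basisFun ℤ (Fin n)) hφ
  have hφK : ∀ i : Fin n, (i : ℕ) < m → φ (b i) = 0 := fun i hi => by
    rw [show i = Fin.castLE hm ⟨i, hi⟩ from rfl, hbK]
    exact (bK _).2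
  obtain ⟨c, hc, hc0l, hc0r, hcΓ⟩ := bΓ.exists_isCocycle_mul_twist_eq_one
    (a := fun p q => χ (b p) (b q)) (fun p q => mul_swap_eq_one_of_alternating hχ₁ hχ₂ hχalt _ _)
    (fun p => hχalt _)
  refine ⟨m, hm, b, ⟨bK, fun i => (hbK i).symm⟩, ⟨bΓ, fun i => (hbΓ i).symm⟩, c, hc,
    ?_, fun i j hi hj => ?_⟩
  · rintro i j (h | h) <;> simp [hφK _ h, hc0l, hc0r]
  · rw [hbΓ ⟨i, hi⟩, hbΓ ⟨j, hj⟩]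
    exact hcΓ ⟨i, hi⟩ ⟨j, hj⟩
end
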